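/- If p ≥ 0 and φ ∈ I_o(−p,0), then ∫_0^∞ (min(1, t/x))^p φ(t) dt/t ≲ φ(x) for all x > 0. -/

import Mathlib

open Real MeasureTheory Set Filter ENNReal

/-- `s_φ(λ) = sup_{t>0} φ(λt)/φ(t)`, valued in `[0,∞]`. -/
noncomputable def sPhi (φ : ℝ → ℝ) (l : ℝ) : ℝ≥0∞ :=
  ⨆ t ∈ Set.Ioi (0:ℝ), ENNReal.ofReal (φ (l * t) / φ t)

/-- `φ ∈ I(a,b)`: `s_φ(λ) = O(λ^a)` as `λ → 0` and `s_φ(λ) = O(λ^b)` as `λ → ∞`. -/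
def memI (φ : ℝ → ℝ) (a b : ℝ) : Prop :=
  (∃ C > (0:ℝ), ∃ δ > (0:ℝ), ∀ l : ℝ, 0 < l → l < δ →
    sPhi φ l ≤ ENNReal.ofReal (C * l ^ a)) ∧
  (∃ C > (0:ℝ), ∃ M : ℝ, ∀ l : ℝ, M < l →
    sPhi φ l ≤ ENNReal.ofReal (C * l ^ b))

/-- `φ ∈ I_o(a,b)`: `s_φ(λ) = o(λ^a)` as `λ → 0` and `s_φ(λ) = o(λ^b)` as `λ → ∞`. -/
def memIo (φ : ℝ → ℝ) (a b : ℝ) : Prop :=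
  (∀ ε > (0:ℝ), ∃ δ > (0:ℝ), ∀ l : ℝ, 0 < l → l < δ →
    sPhi φ l ≤ ENNReal.ofReal (ε * l ^ a)) ∧
  (∀ ε > (0:ℝ), ∃ M : ℝ, ∀ l : ℝ, M < l →
    sPhi φ l ≤ ENNReal.ofReal (ε * l ^ b))

/-!
Submultiplicativity of `s_φ` upgrades the little-o hypotheses to power bounds. Choose `L > 1` with
`s_φ(L) ≤ 1/2` and `L^(-p) s_φ(1/L) ≤ 1/2`; since both `s_φ` and `λ ↦ λ^p s_φ(λ)` are
submultiplicative and bounded on compact subsets of `(0, ∞)`, iterating along powers of `L` gives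
`min(1, λ)^p s_φ(λ) ≲ min(λ, 1/λ)^α` with `α = log_L 2 > 0`. As `φ(t) ≤ s_φ(t/x) φ(x)`, the
integrand is then `≲ φ(x) min(t/x, x/t)^α / t`, whose integral over `(0, ∞)` is `2/α` for every `x`.
-/

theorem lintegral_Ioc_div_rpow_div {α x : ℝ} (hα : 0 < α) (hx : 0 < x) :
    ∫⁻ t in Ioc 0 x, ENNReal.ofReal ((t / x) ^ α / t) = ENNReal.ofReal α⁻¹ := by
  have heq : ∀ t ∈ Ioc 0 x, (t / x) ^ α / t = t ^ (α - 1) / x ^ α := fun t ht => by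
    rw [div_rpow ht.1.le hx.le, rpow_sub_one ht.1.ne']
    ring
  have hint : IntegrableOn (fun t => t ^ (α - 1) / x ^ α) (Ioc 0 x) :=
    ((intervalIntegrable_iff_integrableOn_Ioc_of_le hx.le).1
      (intervalIntegral.intervalIntegrable_rpow' (by linarith))).div_const _
  rw [setLIntegral_congr_fun measurableSet_Ioc fun t ht => congrArg ENNReal.ofReal (heq t ht),
    ← ofReal_integral_eq_lintegral_ofReal hint
      (ae_restrict_of_forall_mem measurableSet_Ioc fun t ht => by have := ht.1; positivity),
    integral_div, ← intervalIntegral.integral_of_le hx.le, integral_rpow (Or.inl (by linarith))]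
  congr 1
  rw [sub_add_cancel, zero_rpow hα.ne', sub_zero]
  field_simp

theorem lintegral_Ioi_div_rpow_div {α x : ℝ} (hα : 0 < α) (hx : 0 < x) :
    ∫⁻ t in Ioi x, ENNReal.ofReal ((x / t) ^ α / t) = ENNReal.ofReal α⁻¹ := by
  have heq : ∀ t ∈ Ioi x, (x / t) ^ α / t = x ^ α * t ^ (-α - 1) := fun t (ht : x < t) => by
    have ht0 : 0 < t := hx.trans ht
    rw [div_rpow hx.le ht0.le, rpow_sub_one ht0.ne', rpow_neg ht0.le]
    ring
  have hint : IntegrableOn (fun t => x ^ α * t ^ (-α - 1)) (Ioi x) :=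
    (integrableOn_Ioi_rpow_of_lt (by linarith) hx).const_mul _
  rw [setLIntegral_congr_fun measurableSet_Ioi fun t ht => congrArg ENNReal.ofReal (heq t ht),
    ← ofReal_integral_eq_lintegral_ofReal hint
      (ae_restrict_of_forall_mem measurableSet_Ioi fun t (ht : x < t) => by
        have := hx.trans ht; positivity),
    integral_const_mul, integral_Ioi_rpow_of_lt (by linarith) hx]
  congr 1
  rw [show -α - 1 + 1 = -α by ring, rpow_neg hx.le]
  field_simp

theorem lintegral_Ioi_min_rpow_div {α x : ℝ} (hα : 0 < α) (hx : 0 < x) :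
    ∫⁻ t in Ioi 0, ENNReal.ofReal (min (t / x) (t / x)⁻¹ ^ α / t) = ENNReal.ofReal (2 / α) := by
  have hsmall : ∀ t ∈ Ioc 0 x, min (t / x) (t / x)⁻¹ = t / x := fun t ht => by
    have h1 : t / x ≤ 1 := (div_le_one hx).2 ht.2
    exact min_eq_left (h1.trans ((one_le_inv₀ (div_pos ht.1 hx)).2 h1))
  have hlarge : ∀ t ∈ Ioi x, min (t / x) (t / x)⁻¹ = x / t := fun t (ht : x < t) => by
    have h1 : 1 < t / x := (one_lt_div hx).2 ht
    rw [min_eq_right ((inv_lt_one_of_one_lt₀ h1).le.trans h1.le), inv_div]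
  rw [← Ioc_union_Ioi_eq_Ioi hx.le, lintegral_union measurableSet_Ioi Ioc_disjoint_Ioi_same,
    setLIntegral_congr_fun measurableSet_Ioc fun t ht => by rw [hsmall t ht],
    setLIntegral_congr_fun measurableSet_Ioi fun t ht => by rw [hlarge t ht],
    lintegral_Ioc_div_rpow_div hα hx, lintegral_Ioi_div_rpow_div hα hx,
    ← ofReal_add (by positivity) (by positivity)]
  ring_nf

section Submultiplicative

variable {s : ℝ → ℝ≥0∞} {L q B : ℝ}

theorem le_ofReal_div_pow_of_mem_Ico_pow (hmul : ∀ a b, 1 ≤ a → 1 ≤ b → s (a * b) ≤ s a * s b)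
    (hL : 1 < L) (hq : 0 ≤ q) (hsL : s L ≤ ENNReal.ofReal q⁻¹)
    (hB : ∀ l ∈ Ico 1 L, s l ≤ ENNReal.ofReal B) (n : ℕ) :
    ∀ l ∈ Ico (L ^ n) (L ^ (n + 1)), s l ≤ ENNReal.ofReal (B / q ^ n) := by
  induction n with
  | zero => simpa using hB
  | succ n ih =>
    rintro l ⟨hlo, hhi⟩
    have hL0 : 0 < L := one_pos.trans hL
    have hlL : l / L ∈ Ico (L ^ n) (L ^ (n + 1)) := by
      rw [pow_succ] at hlo hhi
      exact ⟨(le_div_iff₀ hL0).2 hlo, (div_lt_iff₀ hL0).2 hhi⟩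
    calc s l = s (L * (l / L)) := by rw [mul_div_cancel₀ _ hL0.ne']
      _ ≤ s L * s (l / L) := hmul _ _ hL.le (one_le_pow₀ hL.le |>.trans hlL.1)
      _ ≤ ENNReal.ofReal q⁻¹ * ENNReal.ofReal (B / q ^ n) := mul_le_mul' hsL (ih _ hlL)
      _ = ENNReal.ofReal (B / q ^ (n + 1)) := by
        rw [← ENNReal.ofReal_mul (inv_nonneg.2 hq), pow_succ]
        ring_nf

theorem le_ofReal_mul_inv_rpow_of_submultiplicative
    (hmul : ∀ a b, 1 ≤ a → 1 ≤ b → s (a * b) ≤ s a * s b) (hL : 1 < L) (hq : 1 ≤ q)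
    (hsL : s L ≤ ENNReal.ofReal q⁻¹) (hB₀ : 0 ≤ B) (hB : ∀ l ∈ Ico 1 L, s l ≤ ENNReal.ofReal B)
    {l : ℝ} (hl : 1 ≤ l) : s l ≤ ENNReal.ofReal (q * B * l⁻¹ ^ logb L q) := by
  obtain ⟨n, hn⟩ := exists_nat_pow_near hl hL
  refine (le_ofReal_div_pow_of_mem_Ico_pow hmul hL (by linarith) hsL hB n l hn).trans
    (ENNReal.ofReal_le_ofReal ?_)
  have hL0 : 0 < L := one_pos.trans hL
  have hq0 : 0 < q := one_pos.trans_le hq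
  have hpow : (q ^ (n + 1))⁻¹ ≤ l⁻¹ ^ logb L q := by
    calc (q ^ (n + 1))⁻¹ = ((L ^ (n + 1))⁻¹) ^ logb L q := by
          rw [inv_rpow (by positivity), ← Real.rpow_natCast L, ← rpow_mul hL0.le, mul_comm,
            rpow_mul hL0.le, rpow_logb hL0 hL.ne' hq0, Real.rpow_natCast]
      _ ≤ l⁻¹ ^ logb L q :=
          rpow_le_rpow (by positivity) (inv_anti₀ (by linarith) hn.2.le) (logb_nonneg hL hq)
  calc B / q ^ n = q * B * (q ^ (n + 1))⁻¹ := by field_simp; ring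
    _ ≤ q * B * l⁻¹ ^ logb L q := by gcongr

end Submultiplicative

section sPhi

variable {φ : ℝ → ℝ}

theorem ofReal_div_le_sPhi (l : ℝ) {t : ℝ} (ht : 0 < t) :
    ENNReal.ofReal (φ (l * t) / φ t) ≤ sPhi φ l :=
  le_iSup₂ (f := fun t (_ : t ∈ Ioi (0:ℝ)) => ENNReal.ofReal (φ (l * t) / φ t)) t ht

theorem ofReal_le_sPhi_mul_ofReal (l : ℝ) {t : ℝ} (ht : 0 < t) (hφt : 0 < φ t) :
    ENNReal.ofReal (φ (l * t)) ≤ sPhi φ l * ENNReal.ofReal (φ t) :=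
  calc ENNReal.ofReal (φ (l * t)) = ENNReal.ofReal (φ (l * t) / φ t * φ t) := by
        rw [div_mul_cancel₀ _ hφt.ne']
    _ = ENNReal.ofReal (φ (l * t) / φ t) * ENNReal.ofReal (φ t) := ENNReal.ofReal_mul' hφt.le
    _ ≤ sPhi φ l * ENNReal.ofReal (φ t) := by gcongr; exact ofReal_div_le_sPhi l ht

theorem sPhi_mul_le (hφ : ∀ t ∈ Ioi (0:ℝ), 0 < φ t) (a : ℝ) {b : ℝ} (hb : 0 < b) :
    sPhi φ (a * b) ≤ sPhi φ a * sPhi φ b := by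
  refine iSup₂_le fun t (ht : 0 < t) => ?_
  have hbt : 0 < b * t := mul_pos hb ht
  calc ENNReal.ofReal (φ (a * b * t) / φ t)
      = ENNReal.ofReal (φ (a * (b * t)) / φ (b * t) * (φ (b * t) / φ t)) := by
        rw [div_mul_div_cancel₀ (hφ _ hbt).ne', mul_assoc]
    _ = ENNReal.ofReal (φ (a * (b * t)) / φ (b * t)) * ENNReal.ofReal (φ (b * t) / φ t) :=
        ENNReal.ofReal_mul' (div_nonneg (hφ _ hbt).le (hφ t ht).le)
    _ ≤ sPhi φ a * sPhi φ b := mul_le_mul' (ofReal_div_le_sPhi a hbt) (ofReal_div_le_sPhi b ht)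

theorem ofReal_rpow_mul_sPhi_mul_le (hφ : ∀ t ∈ Ioi (0:ℝ), 0 < φ t) (p : ℝ) {a b : ℝ}
    (ha : 0 ≤ a) (hb : 0 < b) :
    ENNReal.ofReal ((a * b) ^ p) * sPhi φ (a * b) ≤
      ENNReal.ofReal (a ^ p) * sPhi φ a * (ENNReal.ofReal (b ^ p) * sPhi φ b) := by
  rw [mul_rpow ha hb.le, ENNReal.ofReal_mul (by positivity), mul_mul_mul_comm]
  gcongr
  exact sPhi_mul_le hφ a hb

theorem memIo.memI {a b : ℝ} (h : memIo φ a b) : memI φ a b := by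
  obtain ⟨δ, hδ, hsmall⟩ := h.1 1 one_pos
  obtain ⟨M, hlarge⟩ := h.2 1 one_pos
  exact ⟨⟨1, one_pos, δ, hδ, hsmall⟩, ⟨1, one_pos, M, hlarge⟩⟩

theorem exists_sPhi_le_of_mem_Icc {p : ℝ} (hp : 0 ≤ p) (hφ : ∀ t ∈ Ioi (0:ℝ), 0 < φ t)
    (h : memI φ (-p) 0) {a : ℝ} (ha : 0 < a) (b : ℝ) :
    ∃ B > 0, ∀ l ∈ Icc a b, sPhi φ l ≤ ENNReal.ofReal B := by
  obtain ⟨⟨C₀, hC₀, δ, hδ, hsmall⟩, ⟨C, hC, M, hlarge⟩⟩ := h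
  obtain ⟨ν, hMν, hν, hbν⟩ := ((eventually_gt_atTop M).and
    ((eventually_gt_atTop 0).and (eventually_gt_atTop (b / δ)))).exists
  rw [div_lt_comm₀ hδ hν] at hbν
  refine ⟨C₀ * (a / ν) ^ (-p) * C, by positivity, fun l hl => ?_⟩
  have hl0 : 0 < l / ν := div_pos (ha.trans_le hl.1) hν
  calc sPhi φ l = sPhi φ (l / ν * ν) := by rw [div_mul_cancel₀ _ hν.ne']
    _ ≤ sPhi φ (l / ν) * sPhi φ ν := sPhi_mul_le hφ _ hν
    _ ≤ ENNReal.ofReal (C₀ * (l / ν) ^ (-p)) * ENNReal.ofReal (C * ν ^ (0:ℝ)) :=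
        mul_le_mul' (hsmall _ hl0 ((div_le_div_of_nonneg_right hl.2 hν.le).trans_lt hbν))
          (hlarge ν hMν)
    _ ≤ ENNReal.ofReal (C₀ * (a / ν) ^ (-p) * C) := by
        rw [← ENNReal.ofReal_mul (by positivity), Real.rpow_zero, mul_one]
        have : (l / ν) ^ (-p) ≤ (a / ν) ^ (-p) := rpow_le_rpow_of_nonpos (div_pos ha hν)
          (div_le_div_of_nonneg_right hl.1 hν.le) (neg_nonpos.2 hp)
        gcongr

theorem ofReal_inv_rpow_mul_sPhi_inv_le {p L q B : ℝ} (hp : 0 ≤ p)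
    (hφ : ∀ t ∈ Ioi (0:ℝ), 0 < φ t) (hL : 1 < L) (hq : 1 ≤ q)
    (hsL : sPhi φ L⁻¹ ≤ ENNReal.ofReal (q⁻¹ * L⁻¹ ^ (-p))) (hB₀ : 0 ≤ B)
    (hB : ∀ l ∈ Icc L⁻¹ 1, sPhi φ l ≤ ENNReal.ofReal B) {μ : ℝ} (hμ : 1 ≤ μ) :
    ENNReal.ofReal (μ⁻¹ ^ p) * sPhi φ μ⁻¹ ≤ ENNReal.ofReal (q * B * μ⁻¹ ^ logb L q) := by
  refine le_ofReal_mul_inv_rpow_of_submultiplicative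
    (s := fun l => ENNReal.ofReal (l⁻¹ ^ p) * sPhi φ l⁻¹)
    (fun a b ha hb => by
      simpa only [mul_inv] using ofReal_rpow_mul_sPhi_mul_le hφ p (inv_nonneg.2 (by linarith))
        (inv_pos.2 (by linarith)))
    hL hq ?_ hB₀ (fun l hl => ?_) hμ
  · calc ENNReal.ofReal (L⁻¹ ^ p) * sPhi φ L⁻¹
        ≤ ENNReal.ofReal (L⁻¹ ^ p) * ENNReal.ofReal (q⁻¹ * L⁻¹ ^ (-p)) := by gcongr
      _ = ENNReal.ofReal q⁻¹ := by
          rw [← ENNReal.ofReal_mul (by positivity), rpow_neg (by positivity)]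
          field_simp
  · have hl0 : 0 < l := one_pos.trans_le hl.1
    have hl₁ : l⁻¹ ≤ 1 := inv_le_one_of_one_le₀ hl.1
    calc ENNReal.ofReal (l⁻¹ ^ p) * sPhi φ l⁻¹ ≤ 1 * ENNReal.ofReal B :=
          mul_le_mul' (ENNReal.ofReal_le_one.2 (rpow_le_one (by positivity) hl₁ hp))
            (hB _ ⟨inv_anti₀ hl0 hl.2.le, hl₁⟩)
      _ = ENNReal.ofReal B := one_mul _

theorem exists_ofReal_min_rpow_mul_sPhi_le {p : ℝ} (hp : 0 ≤ p)
    (hφ : ∀ t ∈ Ioi (0:ℝ), 0 < φ t) (h : memIo φ (-p) 0) :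
    ∃ C > (0:ℝ), ∃ α > (0:ℝ), ∀ μ > (0:ℝ),
      ENNReal.ofReal (min 1 μ ^ p) * sPhi φ μ ≤ ENNReal.ofReal (C * min μ μ⁻¹ ^ α) := by
  obtain ⟨δ, hδ, hsmall⟩ := h.1 2⁻¹ (by norm_num)
  obtain ⟨M, hlarge⟩ := h.2 2⁻¹ (by norm_num)
  obtain ⟨L, hL, hML, hLδ⟩ := ((eventually_gt_atTop 1).and
    ((eventually_gt_atTop M).and (eventually_gt_atTop δ⁻¹))).exists
  have hL₀ : 0 < L⁻¹ := inv_pos.2 (zero_lt_one.trans hL)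
  have hL₁ : L⁻¹ ≤ 1 := inv_le_one_of_one_le₀ hL.le
  rw [inv_lt_comm₀ hδ (zero_lt_one.trans hL)] at hLδ
  obtain ⟨B, hB, hsB⟩ := exists_sPhi_le_of_mem_Icc hp hφ h.memI hL₀ L
  refine ⟨2 * B, by positivity, logb L 2, logb_pos hL one_lt_two, fun μ hμ => ?_⟩
  rcases le_total 1 μ with h1 | h1
  · rw [min_eq_left h1, min_eq_right ((inv_le_one_of_one_le₀ h1).trans h1), Real.one_rpow,
      ENNReal.ofReal_one, one_mul]
    exact le_ofReal_mul_inv_rpow_of_submultiplicative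
      (fun a b _ hb => sPhi_mul_le hφ a (by linarith)) hL one_le_two
      (by simpa using hlarge L hML) hB.le (fun l hl => hsB l ⟨hL₁.trans hl.1, hl.2.le⟩) h1
  · rw [min_eq_right h1, min_eq_left (h1.trans ((one_le_inv₀ hμ).2 h1))]
    simpa only [inv_inv] using ofReal_inv_rpow_mul_sPhi_inv_le hp hφ hL one_le_two
      (hsmall _ hL₀ hLδ) hB.le (fun l hl => hsB l ⟨hl.1, hl.2.trans hL.le⟩) ((one_le_inv₀ hμ).2 h1)

theorem ofReal_min_rpow_mul_div_le (hφ : ∀ t ∈ Ioi (0:ℝ), 0 < φ t) {p C α x t : ℝ}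
    (hC : 0 ≤ C) (hx : 0 < x) (ht : 0 < t)
    (hbound : ENNReal.ofReal (min 1 (t / x) ^ p) * sPhi φ (t / x) ≤
      ENNReal.ofReal (C * min (t / x) (t / x)⁻¹ ^ α)) :
    ENNReal.ofReal (min 1 (t / x) ^ p * φ t / t) ≤
      ENNReal.ofReal (C * φ x) * ENNReal.ofReal (min (t / x) (t / x)⁻¹ ^ α / t) := by
  have hm : 0 ≤ min 1 (t / x) ^ p := rpow_nonneg (le_min zero_le_one (by positivity)) p
  have hg : 0 ≤ min (t / x) (t / x)⁻¹ ^ α := rpow_nonneg (le_min (by positivity) (by positivity)) α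
  have hφt : ENNReal.ofReal (φ t) ≤ sPhi φ (t / x) * ENNReal.ofReal (φ x) := by
    simpa only [div_mul_cancel₀ t hx.ne'] using ofReal_le_sPhi_mul_ofReal (t / x) hx (hφ x hx)
  calc ENNReal.ofReal (min 1 (t / x) ^ p * φ t / t)
      = ENNReal.ofReal (min 1 (t / x) ^ p) * ENNReal.ofReal (φ t) * ENNReal.ofReal t⁻¹ := by
        rw [div_eq_mul_inv, ENNReal.ofReal_mul' (inv_nonneg.2 ht.le), ENNReal.ofReal_mul hm]
    _ ≤ ENNReal.ofReal (min 1 (t / x) ^ p) * sPhi φ (t / x) * ENNReal.ofReal (φ x) *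
          ENNReal.ofReal t⁻¹ := by
        rw [mul_assoc (ENNReal.ofReal _) (sPhi φ _)]; gcongr
    _ ≤ ENNReal.ofReal (C * min (t / x) (t / x)⁻¹ ^ α) * ENNReal.ofReal (φ x) *
          ENNReal.ofReal t⁻¹ := by gcongr
    _ = ENNReal.ofReal (C * φ x) * ENNReal.ofReal (min (t / x) (t / x)⁻¹ ^ α / t) := by
        rw [ENNReal.ofReal_mul hC, ENNReal.ofReal_mul hC, div_eq_mul_inv (min _ _ ^ α),
          ENNReal.ofReal_mul hg]
        ring

end sPhi

/-- if `p ≥ 0` and `φ ∈ I_o(−p,0)`, then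
`∫_0^∞ (min(1, t/x))^p φ(t) dt/t ≲ φ(x)` uniformly in `x > 0`. -/
theorem lintegral_min_rpow_le_of_memIo_neg (p : ℝ) (hp : 0 ≤ p)
    (φ : ℝ → ℝ) (hφ : ∀ t ∈ Set.Ioi (0:ℝ), 0 < φ t) (h : memIo φ (-p) 0) :
    ∃ C > (0:ℝ), ∀ x > (0:ℝ),
      ∫⁻ t in Set.Ioi (0:ℝ), ENNReal.ofReal ((min 1 (t / x)) ^ p * φ t / t) ≤
        ENNReal.ofReal (C * φ x) := by
  obtain ⟨C, hC, α, hα, hbound⟩ := exists_ofReal_min_rpow_mul_sPhi_le hp hφ h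
  refine ⟨C * (2 / α), by positivity, fun x hx => ?_⟩
  calc ∫⁻ t in Ioi 0, ENNReal.ofReal (min 1 (t / x) ^ p * φ t / t)
      ≤ ∫⁻ t in Ioi 0, ENNReal.ofReal (C * φ x) *
          ENNReal.ofReal (min (t / x) (t / x)⁻¹ ^ α / t) :=
        setLIntegral_mono' measurableSet_Ioi fun t (ht : 0 < t) =>
          ofReal_min_rpow_mul_div_le hφ hC.le hx ht (hbound _ (div_pos ht hx))
    _ = ENNReal.ofReal (C * φ x) * ENNReal.ofReal (2 / α) := by
        rw [lintegral_const_mul' _ _ ENNReal.ofReal_ne_top, lintegral_Ioi_min_rpow_div hα hx]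
    _ = ENNReal.ofReal (C * (2 / α) * φ x) := by
        rw [← ENNReal.ofReal_mul (by have := hφ x hx; positivity)]
        ring_nf
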